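/- arXiv:2010.03177 — 4 statements merged into one kernel-verified Lean document; each statement's English description precedes it below -/
import Mathlib

section
/- For every finite odd set A ⊆ Z^d, the number of edges in the edge-boundary of A equals 2d times the difference between the number of odd vertices in A and the number of even vertices in A. In particular, if A contains an even vertex then |∂A| ≥ 2d(2d−1). -/
open Finset

/-- Vertices of the lattice `ℤ^d`. -/
abbrev Vtx (d : ℕ) := Fin d → ℤ

/-- The nearest neighbors of a lattice point `u`. -/
def nbrs {d : ℕ} (u : Vtx d) : Finset (Vtx d) :=
  Finset.univ.biUnion fun i : Fin d =>
    {Function.update u i (u i + 1), Function.update u i (u i - 1)}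

/-- A vertex is even if the sum of its coordinates is even. -/
def evenV {d : ℕ} (u : Vtx d) : Prop := (∑ i, u i) % 2 = 0

instance {d : ℕ} : DecidablePred (evenV (d := d)) := fun u =>
  inferInstanceAs (Decidable ((∑ i, u i) % 2 = 0))

/-- The edge boundary of `A`, as the set of (directed) boundary edges
`(u, v)` with `u ∈ A`, `v ∉ A` adjacent. -/
def edgeBdry {d : ℕ} (A : Finset (Vtx d)) : Finset (Vtx d × Vtx d) :=
  A.biUnion fun u => ((nbrs u).filter fun v => v ∉ A).image fun v => (u, v)

/-! Every edge of `ℤ^d` joins an even and an odd vertex, and an even vertex of an odd set `A` has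
all of its `2d` neighbours in `A`. Hence, among the `2d · #odd` edges leaving odd vertices of `A`,
those ending inside `A` are exactly the `2d · #even` edges at even vertices, and the rest form
`∂A` (even vertices contribute nothing to `∂A`). For the bound, the even part of `A` translated
by the `2d` unit vectors `nbrs 0` lies in the odd part of `A`, so Cauchy–Davenport in the
torsion-free group `ℤ^d` gives `#odd ≥ #even + 2d - 1`. -/

lemma Finset.card_biUnion_image_prodMk {α β : Type*} [DecidableEq α] [DecidableEq β]
    (s : Finset α) (t : α → Finset β) :
    #(s.biUnion fun a => (t a).image (a, ·)) = ∑ a ∈ s, #(t a) := by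
  rw [card_biUnion]
  · exact sum_congr rfl fun a _ => card_image_of_injective _ (Prod.mk_right_injective a)
  · intro a _ a' _ ha
    simp only [Function.onFun, disjoint_left, mem_image]
    rintro _ ⟨b, -, rfl⟩ ⟨b', -, h⟩
    exact ha (congrArg Prod.fst h).symm

variable {d : ℕ}

lemma update_add_eq_add_single (u : Vtx d) (i : Fin d) (c : ℤ) :
    Function.update u i (u i + c) = u + Pi.single i c := by
  ext j
  rcases eq_or_ne j i with rfl | h <;> simp [*]

lemma mem_nbrs {u v : Vtx d} :
    v ∈ nbrs u ↔ ∃ i, v = u + Pi.single i 1 ∨ v = u + Pi.single i (-1) := by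
  simp [nbrs, update_add_eq_add_single, sub_eq_add_neg]

lemma add_mem_nbrs {u b : Vtx d} (hb : b ∈ nbrs 0) : u + b ∈ nbrs u := by
  obtain ⟨i, rfl | rfl⟩ := mem_nbrs.1 hb <;> exact mem_nbrs.2 ⟨i, by simp⟩

lemma mem_nbrs_comm {u v : Vtx d} (h : v ∈ nbrs u) : u ∈ nbrs v := by
  obtain ⟨i, rfl | rfl⟩ := mem_nbrs.1 h <;> exact mem_nbrs.2 ⟨i, by simp [Pi.single_neg]⟩

lemma evenV_iff_of_mem_nbrs {u v : Vtx d} (h : v ∈ nbrs u) : evenV v ↔ ¬ evenV u := by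
  obtain ⟨i, rfl | rfl⟩ := mem_nbrs.1 h <;> simp [evenV, sum_add_distrib] <;> omega

lemma card_nbrs (u : Vtx d) : #(nbrs u) = 2 * d := by
  rw [nbrs, card_biUnion]
  · have hpair (i : Fin d) :
        #{Function.update u i (u i + 1), Function.update u i (u i - 1)} = 2 :=
      card_pair ((Function.update_injective u i).ne (by omega))
    simp [hpair, mul_comm]
  · intro i _ j _ hij
    simp only [Function.onFun, disjoint_insert_left, disjoint_singleton_left, mem_insert,
      mem_singleton, not_or]
    have hne {a b : ℤ} (ha : a ≠ u i) : Function.update u i a ≠ Function.update u j b :=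
      fun h => ha (by simpa [hij] using congrFun h i)
    exact ⟨⟨hne (by omega), hne (by omega)⟩, hne (by omega), hne (by omega)⟩

open Pointwise

lemma card_edgeBdry (A : Finset (Vtx d)) : #(edgeBdry A) = ∑ u ∈ A, #{v ∈ nbrs u | v ∉ A} :=
  card_biUnion_image_prodMk _ _

def IsOddSet (A : Finset (Vtx d)) : Prop :=
  ∀ u ∈ A, (∃ v ∈ nbrs u, v ∉ A) → ¬ evenV u

namespace IsOddSet

variable {A : Finset (Vtx d)} (hA : IsOddSet A)
include hA

lemma nbrs_subset {u : Vtx d} (hu : u ∈ A) (he : evenV u) : nbrs u ⊆ A :=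
  fun v hv => by_contra fun hvA => hA u hu ⟨v, hv, hvA⟩ he

lemma sum_card_nbrs_mem_of_odd :
    ∑ u ∈ A with ¬ evenV u, #{v ∈ nbrs u | v ∈ A} = 2 * d * #{u ∈ A | evenV u} := by
  have habove (u) (hu : u ∈ {u ∈ A | ¬ evenV u}) :
      #{v ∈ nbrs u | v ∈ A} =
        #({u ∈ A | evenV u}.bipartiteAbove (fun u v => v ∈ nbrs u) u) := by
    have hu := mem_filter.1 hu
    congr 1
    ext v
    simp only [bipartiteAbove, mem_filter]
    constructor
    · rintro ⟨hv, hvA⟩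
      exact ⟨⟨hvA, (evenV_iff_of_mem_nbrs hv).2 hu.2⟩, hv⟩
    · rintro ⟨⟨hvA, -⟩, hv⟩
      exact ⟨hv, hvA⟩
  have hbelow (v) (hv : v ∈ {u ∈ A | evenV u}) :
      #({u ∈ A | ¬ evenV u}.bipartiteBelow (fun u v => v ∈ nbrs u) v) = 2 * d := by
    have hv := mem_filter.1 hv
    rw [← card_nbrs v]
    congr 1
    ext u
    simp only [bipartiteBelow, mem_filter]
    constructor
    · rintro ⟨-, hvu⟩
      exact mem_nbrs_comm hvu
    · intro hu
      exact ⟨⟨hA.nbrs_subset hv.1 hv.2 hu, fun he => (evenV_iff_of_mem_nbrs hu).1 he hv.2⟩,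
        mem_nbrs_comm hu⟩
  rw [sum_congr rfl habove, sum_card_bipartiteAbove_eq_sum_card_bipartiteBelow,
    sum_congr rfl hbelow, sum_const, smul_eq_mul, mul_comm]

lemma card_edgeBdry_add :
    #(edgeBdry A) + 2 * d * #{u ∈ A | evenV u} = 2 * d * #{u ∈ A | ¬ evenV u} := by
  have hout : #(edgeBdry A) = ∑ u ∈ A with ¬ evenV u, #{v ∈ nbrs u | v ∉ A} := by
    rw [card_edgeBdry, sum_filter_of_ne]
    intro u hu hne he
    apply hne
    exact card_eq_zero.2 (filter_eq_empty_iff.2 fun v hv => not_not.2 (hA.nbrs_subset hu he hv))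
  have hdeg (u) : #{v ∈ nbrs u | v ∉ A} + #{v ∈ nbrs u | v ∈ A} = 2 * d := by
    rw [add_comm, card_filter_add_card_filter_not, card_nbrs]
  rw [hout, ← hA.sum_card_nbrs_mem_of_odd, ← sum_add_distrib, sum_congr rfl fun u _ => hdeg u,
    sum_const, smul_eq_mul, mul_comm]

lemma card_even_add_le_card_odd (hd : 0 < d) (hE : ∃ u ∈ A, evenV u) :
    #{u ∈ A | evenV u} + 2 * d - 1 ≤ #{u ∈ A | ¬ evenV u} := by
  obtain ⟨u, hu, he⟩ := hE
  have hsub : {u ∈ A | evenV u} + nbrs (0 : Vtx d) ⊆ {u ∈ A | ¬ evenV u} := by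
    intro x hx
    obtain ⟨s, hs, b, hb, rfl⟩ := mem_add.1 hx
    have hs := mem_filter.1 hs
    have hsb := add_mem_nbrs (u := s) hb
    exact mem_filter.2
      ⟨hA.nbrs_subset hs.1 hs.2 hsb, fun he => (evenV_iff_of_mem_nbrs hsb).1 he hs.2⟩
  calc #{u ∈ A | evenV u} + 2 * d - 1 = #{u ∈ A | evenV u} + #(nbrs (0 : Vtx d)) - 1 := by
        rw [card_nbrs]
    _ ≤ #({u ∈ A | evenV u} + nbrs (0 : Vtx d)) :=
        cauchy_davenport_of_isAddTorsionFree ⟨u, mem_filter.2 ⟨hu, he⟩⟩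
          (card_pos.1 (by rw [card_nbrs]; omega))
    _ ≤ _ := card_le_card hsub

end IsOddSet

/-- For a finite odd set `A ⊆ ℤ^d` (all internal-boundary vertices are odd),
`|∂A| = 2d * (#odd vertices of A − #even vertices of A)`; in particular, if `A` contains an
even vertex then `|∂A| ≥ 2d(2d−1)`. -/
theorem odd_set_boundary {d : ℕ} (A : Finset (Vtx d))
    (hodd : ∀ u ∈ A, (∃ v ∈ nbrs u, v ∉ A) → ¬ evenV u) :
    ((edgeBdry A).card : ℤ)
        = 2 * d * (((A.filter fun u => ¬ evenV u).card : ℤ)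
            - ((A.filter fun u => evenV u).card : ℤ))
      ∧ ((∃ u ∈ A, evenV u) → 2 * d * (2 * d - 1) ≤ (edgeBdry A).card) := by
  have hA : IsOddSet A := hodd
  have hcount := hA.card_edgeBdry_add
  refine ⟨by zify at hcount; linear_combination hcount, fun hE => ?_⟩
  rcases Nat.eq_zero_or_pos d with rfl | hd
  · simp
  have hgap :
      2 * d * (2 * d - 1) + 2 * d * #{u ∈ A | evenV u} ≤ 2 * d * #{u ∈ A | ¬ evenV u} := by
    rw [← mul_add]
    exact Nat.mul_le_mul_left _ (by have := hA.card_even_add_le_card_odd hd hE; omega)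
  linarith
end

section
/- Let G be a connected graph, A, B ⊆ V(G) disjoint sets, and A' a co-connected closure of A (the complement of a connected component of V∖A). Then the internal vertex boundary of A' is contained in that of A, the external vertex boundary of A' is contained in that of A, and the edge boundary of A' is contained in the edge boundary of A. -/
open scoped Classical

/-- Adjacency within a set `U`: both endpoints lie in `U` and they are adjacent in `G`. -/
def within {V : Type*} (G : SimpleGraph V) (U : Set V) (x y : V) : Prop :=
  G.Adj x y ∧ x ∈ U ∧ y ∈ U

/-- The co-connected closure of `A` with respect to `v`: the complement of the connected
component of `V ∖ A` containing `v` (all of `V` if `v ∈ A`). -/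
def coClosure {V : Type*} (G : SimpleGraph V) (A : Set V) (v : V) : Set V :=
  if v ∈ A then Set.univ
  else {w | Relation.ReflTransGen (within G Aᶜ) v w}ᶜ

/-- Internal vertex boundary: vertices of `U` adjacent to a vertex outside `U`. -/
def intBdry {V : Type*} (G : SimpleGraph V) (U : Set V) : Set V :=
  {u | u ∈ U ∧ ∃ w, w ∉ U ∧ G.Adj u w}

/-- External vertex boundary: vertices outside `U` adjacent to a vertex of `U`. -/
def extBdry {V : Type*} (G : SimpleGraph V) (U : Set V) : Set V :=
  {u | u ∉ U ∧ ∃ w ∈ U, G.Adj u w}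

/-- Edge boundary, as directed pairs from inside `U` to outside `U`. -/
def edgeBdryD {V : Type*} (G : SimpleGraph V) (U : Set V) : Set (V × V) :=
  {p | p.1 ∈ U ∧ p.2 ∉ U ∧ G.Adj p.1 p.2}

lemma coClosure_key {V : Type*} (G : SimpleGraph V) (A : Set V) (v : V) (hv : v ∉ A)
    {u w : V} (hu : ¬ Relation.ReflTransGen (within G Aᶜ) v u)
    (hw : Relation.ReflTransGen (within G Aᶜ) v w) (ha : G.Adj u w) :
    u ∈ A ∧ w ∉ A := by
  have hwA : w ∉ A := by
    induction hw with
    | refl => exact hv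
    | tail _ h _ => exact h.2.2
  refine ⟨?_, hwA⟩
  by_contra huA
  exact hu (hw.tail ⟨ha.symm, hwA, huA⟩)

/-- For a connected graph `G`, disjoint `A, B ⊆ V(G)`, and `A'` a co-connected
closure of `A`, one has `∂•A' ⊆ ∂•A`, `∂∘A' ⊆ ∂∘A`, and `∂A' ⊆ ∂A`. -/
theorem coClosure_boundaries {V : Type*} (G : SimpleGraph V) (hG : G.Connected)
    (A B : Set V) (hAB : Disjoint A B) (v : V) (A' : Set V) (hA' : A' = coClosure G A v) :
    intBdry G A' ⊆ intBdry G A ∧ extBdry G A' ⊆ extBdry G A ∧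
      edgeBdryD G A' ⊆ edgeBdryD G A := by
  subst hA'
  unfold coClosure
  by_cases hv : v ∈ A
  · simp only [if_pos hv]
    refine ⟨?_, ?_, ?_⟩
    · rintro u ⟨-, w, hw, -⟩; exact absurd (Set.mem_univ w) hw
    · rintro u ⟨hu, -⟩; exact absurd (Set.mem_univ u) hu
    · rintro ⟨a, b⟩ ⟨-, hb, -⟩; exact absurd (Set.mem_univ b) hb
  · simp only [if_neg hv]
    refine ⟨?_, ?_, ?_⟩
    · rintro u ⟨hu, w, hw, ha⟩
      simp only [Set.mem_compl_iff, Set.mem_setOf_eq, not_not] at hu hw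
      obtain ⟨h1, h2⟩ := coClosure_key G A v hv hu hw ha
      exact ⟨h1, w, h2, ha⟩
    · rintro u ⟨hu, w, hw, ha⟩
      simp only [Set.mem_compl_iff, Set.mem_setOf_eq, not_not] at hu hw
      obtain ⟨h1, h2⟩ := coClosure_key G A v hv hw hu ha.symm
      exact ⟨h2, w, h1, ha⟩
    · rintro ⟨a, b⟩ ⟨h1, h2, ha⟩
      simp only [Set.mem_compl_iff, Set.mem_setOf_eq, not_not] at h1 h2
      obtain ⟨g1, g2⟩ := coClosure_key G A v hv h1 h2 ha
      exact ⟨g1, g2, ha⟩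
end

section
/- In a graph of maximum degree Δ, for any finite S ⊆ V and t ≥ 1 there exists T ⊆ S with |T| ≤ ((1 + log Δ)/t)·|S| such that N_t(S) ⊆ N(T), i.e., every vertex having at least t neighbors in S has at least one neighbor in T. -/
open Finset

noncomputable def hb (ε y : ℝ) : ℝ := if y ≤ 1/ε then y else 1/ε + (1/ε) * Real.log (ε*y)

lemma hb_step (ε : ℝ) (hε : 0 < ε) (hε1 : ε ≤ 1) (m m' : ℝ)
    (hm'0 : 0 ≤ m') (h1 : m' + 1 ≤ m) (h2 : m' ≤ m * (1 - ε)) :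
    1 + hb ε m' ≤ hb ε m := by
  have ha : (0:ℝ) < 1/ε := by positivity
  have haε : (1/ε) * ε = 1 := by field_simp
  unfold hb
  by_cases hm : m ≤ 1/ε
  · have hm' : m' ≤ 1/ε := by nlinarith
    rw [if_pos hm, if_pos hm']
    linarith
  · push_neg at hm
    rw [if_neg (not_le.mpr hm)]
    set x := ε * m with hxdef
    have hx : 1 < x := by
      have : (1/ε) * ε < m * ε := by nlinarith
      rw [haε] at this; nlinarith
    have hx0 : 0 < x := by linarith
    have hL : 1 - 1/x ≤ Real.log x := by
      have := Real.log_le_sub_one_of_pos (x := 1/x) (by positivity)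
      rw [Real.log_div one_ne_zero (by linarith), Real.log_one] at this
      linarith
    by_cases hm'a : m' ≤ 1/ε
    · rw [if_pos hm'a]
      by_cases hB : x * (1 - ε) ≤ 1
      · -- 1 + m' ≤ 1/ε + 1/ε * log x, using m' ≤ m(1-ε) = (1/ε) x (1-ε)
        have hmx : m = x / ε := by field_simp [hxdef]; try ring
        have hm'2 : m' * ε ≤ x * (1-ε) := by
          calc m' * ε ≤ (m * (1-ε)) * ε := by nlinarith
          _ = x * (1-ε) := by rw [hmx]; field_simp; try ring
        -- need ε*(1+m') ≤ 1 + log x ; use log x ≥ 1 - 1/x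
        have key : ε + m' * ε ≤ 1 + Real.log x := by
          have h3 : x * (ε + x*(1-ε)) ≤ x * (1 + (1 - 1/x)) := by
            have : x * (1/x) = 1 := by field_simp
            nlinarith [sq_nonneg (x-1)]
          have h4 : ε + x*(1-ε) ≤ 1 + (1 - 1/x) := le_of_mul_le_mul_left h3 hx0
          nlinarith
        nlinarith
      · push_neg at hB
        have hεlt : ε < 1 := by nlinarith
        have hlx : ε ≤ Real.log x := by
          have h5 : Real.log (1-ε) ≤ -ε := by
            have := Real.log_le_sub_one_of_pos (x := 1-ε) (by linarith)
            linarith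
          have h6 : Real.log (1-ε) + Real.log x = Real.log (x*(1-ε)) := by
            rw [← Real.log_mul (by linarith) (by linarith)]; ring_nf
          have h7 : 0 ≤ Real.log (x*(1-ε)) := Real.log_nonneg (by linarith)
          linarith
        have : 1 ≤ (1/ε) * Real.log x := by
          calc (1:ℝ) = (1/ε) * ε := haε.symm
          _ ≤ (1/ε) * Real.log x := by nlinarith
        linarith
    · push_neg at hm'a
      rw [if_neg (not_le.mpr hm'a)]
      have hm'0' : 0 < m' := by linarith
      have hεlt : ε < 1 := by nlinarith
      have hexp : 1 - ε ≤ Real.exp (-ε) := by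
        have := Real.add_one_le_exp (-ε); linarith
      have hmm : m' ≤ m * Real.exp (-ε) := by nlinarith [Real.exp_pos (-ε), h2]
      have hlog : Real.log (ε * m') ≤ Real.log (ε * m) - ε := by
        have h8 : ε * m' ≤ (ε * m) * Real.exp (-ε) := by nlinarith
        have h9 := Real.log_le_log (by positivity) h8
        rw [Real.log_mul (by positivity) (Real.exp_ne_zero _), Real.log_exp] at h9
        linarith
      have h10 : (1/ε) * Real.log (ε*m') ≤ (1/ε) * (Real.log (ε*m) - ε) :=
        mul_le_mul_of_nonneg_left hlog (le_of_lt ha)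
      have : (1/ε) * (Real.log (ε*m) - ε) = (1/ε) * Real.log (ε*m) - 1 := by
        field_simp
      linarith

open Finset

lemma sum_inter_comm {V : Type*} [Fintype V] [DecidableEq V] (G : SimpleGraph V)
    [DecidableRel G.Adj] (A B : Finset V) :
    ∑ x ∈ A, (G.neighborFinset x ∩ B).card = ∑ w ∈ B, (G.neighborFinset w ∩ A).card := by
  have h : ∀ (C : Finset V) (x : V), G.neighborFinset x ∩ C = C.filter (fun w => G.Adj x w) := by
    intro C x; ext a; simp [SimpleGraph.mem_neighborFinset, and_comm]
  simp only [h, Finset.card_filter]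
  rw [Finset.sum_comm]
  refine Finset.sum_congr rfl fun w _ => Finset.sum_congr rfl fun x _ => ?_
  exact if_congr (G.adj_comm x w) rfl rfl

lemma greedy {V : Type*} [Fintype V] [DecidableEq V] (G : SimpleGraph V) [DecidableRel G.Adj]
    (S : Finset V) (t : ℝ) (ht : 1 ≤ t) (hts : t ≤ (S.card : ℝ)) :
    ∀ m : ℕ, ∀ W : Finset V, W.card = m →
      (∀ w ∈ W, t ≤ ((G.neighborFinset w ∩ S).card : ℝ)) →
      ∃ T ⊆ S, (∀ w ∈ W, ∃ u ∈ T, G.Adj w u) ∧ (T.card : ℝ) ≤ hb (t / S.card) m := by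
  have hs : (0:ℝ) < S.card := by linarith
  have hε : 0 < t / S.card := by positivity
  have hε1 : t / S.card ≤ 1 := by rw [div_le_one hs]; exact hts
  intro m
  induction m using Nat.strong_induction_on with
  | _ m ih =>
    intro W hWc hWt
    rcases Finset.eq_empty_or_nonempty W with rfl | ⟨w0, hw0⟩
    · have hm0 : m = 0 := by simpa using hWc.symm
      subst hm0
      refine ⟨∅, Finset.empty_subset _, by simp, ?_⟩
      simp only [Finset.card_empty, Nat.cast_zero, hb]
      rw [if_pos (by positivity : (0:ℝ) ≤ 1/(t/S.card))]
    · have hm1 : 1 ≤ m := by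
        rw [← hWc]; exact Finset.card_pos.mpr ⟨w0, hw0⟩
      have hm0 : (0:ℝ) < m := by exact_mod_cast hm1
      have hSne : S.Nonempty := by
        rw [← Finset.card_pos]; exact_mod_cast hs
      obtain ⟨x, hxS, hxgood⟩ :
          ∃ x ∈ S, t * m / S.card ≤ ((G.neighborFinset x ∩ W).card : ℝ) := by
        by_contra hcon
        push_neg at hcon
        have hlt : ∑ x ∈ S, ((G.neighborFinset x ∩ W).card : ℝ)
            < ∑ _x ∈ S, t * m / S.card :=
          Finset.sum_lt_sum_of_nonempty hSne hcon
        have hswap : ∑ x ∈ S, ((G.neighborFinset x ∩ W).card : ℝ)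
            = ∑ w ∈ W, ((G.neighborFinset w ∩ S).card : ℝ) := by
          exact_mod_cast congrArg (Nat.cast : ℕ → ℝ) (sum_inter_comm G S W)
        have hge : (t * m : ℝ) ≤ ∑ w ∈ W, ((G.neighborFinset w ∩ S).card : ℝ) := by
          calc (t * m : ℝ) = ∑ _w ∈ W, t := by
                rw [Finset.sum_const, hWc, nsmul_eq_mul, mul_comm]
          _ ≤ _ := Finset.sum_le_sum hWt
        rw [hswap, Finset.sum_const, nsmul_eq_mul] at hlt
        have heq : (S.card : ℝ) * (t * m / S.card) = t * m := by
          field_simp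
        nlinarith [hlt, hge]
      set c := (G.neighborFinset x ∩ W).card with hc
      have hc1 : 1 ≤ c := by
        have hpos : (0:ℝ) < t * m / S.card := by positivity
        have : (0:ℝ) < c := lt_of_lt_of_le hpos hxgood
        have : 0 < c := by exact_mod_cast this
        omega
      set W' := W \ G.neighborFinset x with hW'
      have hcard : W'.card + c = m := by
        rw [hW', hc, Finset.inter_comm]
        rw [← hWc]
        have := Finset.card_inter_add_card_sdiff W (G.neighborFinset x)
        omega
      have hlt' : W'.card < m := by omega
      obtain ⟨T', hT'S, hT'cov, hT'card⟩ := ih W'.card hlt' W' rfl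
        (fun w hw => hWt w (Finset.mem_sdiff.mp hw).1)
      refine ⟨insert x T', Finset.insert_subset hxS hT'S, ?_, ?_⟩
      · intro w hw
        by_cases hwx : w ∈ G.neighborFinset x
        · exact ⟨x, Finset.mem_insert_self _ _, ((SimpleGraph.mem_neighborFinset _ _ _).mp hwx).symm⟩
        · obtain ⟨u, hu, hadj⟩ := hT'cov w (Finset.mem_sdiff.mpr ⟨hw, hwx⟩)
          exact ⟨u, Finset.mem_insert_of_mem hu, hadj⟩
      · have hm'1 : ((W'.card:ℝ)) + 1 ≤ m := by
          exact_mod_cast (by omega : W'.card + 1 ≤ m)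
        have hcr : (W'.card : ℝ) = (m : ℝ) - c := by
          have h2 : ((W'.card + c : ℕ) : ℝ) = (m:ℝ) := by exact_mod_cast congrArg (Nat.cast : ℕ → ℝ) hcard
          push_cast at h2; linarith
        have hm'2 : ((W'.card:ℝ)) ≤ (m:ℝ) * (1 - t / S.card) := by
          have hexp : (m:ℝ) * (1 - t / S.card) = m - t * m / S.card := by
            field_simp; try ring
          rw [hcr, hexp]; linarith [hxgood]
        have hstep := hb_step (t/S.card) hε hε1 m W'.card (by positivity) hm'1 hm'2
        have hci : ((insert x T').card : ℝ) ≤ (T'.card:ℝ) + 1 := by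
          exact_mod_cast Finset.card_insert_le x T'
        linarith

/-- In a graph of maximum degree `Δ`, for any finite `S` and real `t ≥ 1`
there is `T ⊆ S` with `|T| ≤ ((1 + log Δ)/t) * |S|` such that every vertex having at least `t`
neighbors in `S` has a neighbor in `T`. -/
theorem exists_covering_subset {V : Type*} [Fintype V] [DecidableEq V]
    (G : SimpleGraph V) [DecidableRel G.Adj]
    (Δ : ℕ) (hΔ : ∀ v : V, G.degree v ≤ Δ)
    (S : Finset V) (t : ℝ) (ht : 1 ≤ t) :
    ∃ T ⊆ S, (T.card : ℝ) ≤ (1 + Real.log Δ) / t * S.card ∧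
      ∀ v : V, t ≤ ((G.neighborFinset v ∩ S).card : ℝ) → ∃ u ∈ T, G.Adj v u := by
  classical
  have ht0 : (0:ℝ) < t := by linarith
  have hlogΔ : 0 ≤ Real.log Δ := Real.log_natCast_nonneg Δ
  set U := Finset.univ.filter (fun v => t ≤ ((G.neighborFinset v ∩ S).card : ℝ)) with hU
  rcases Finset.eq_empty_or_nonempty U with hUe | ⟨v0, hv0⟩
  · refine ⟨∅, Finset.empty_subset _, ?_, ?_⟩
    · have h0 : (0:ℝ) ≤ (1 + Real.log Δ)/t * S.card := by
        apply mul_nonneg _ (Nat.cast_nonneg _)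
        apply div_nonneg (by linarith) (by linarith)
      simpa using h0
    · intro v hv
      exfalso
      have hm : v ∈ U := by rw [hU]; simp [hv]
      rw [hUe] at hm
      simp at hm
  · have hv0' := (Finset.mem_filter.mp hv0).2
    have hts : t ≤ (S.card : ℝ) := by
      refine le_trans hv0' ?_
      exact_mod_cast Finset.card_le_card (Finset.inter_subset_right)
    have hs : (0:ℝ) < S.card := by linarith
    obtain ⟨T, hTS, hTcov, hTcard⟩ := greedy G S t ht hts U.card U rfl
      (fun w hw => (Finset.mem_filter.mp hw).2)
    refine ⟨T, hTS, ?_, fun v hv => hTcov v (by rw [hU]; simp [hv])⟩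
    -- double counting: t * |U| ≤ Δ * |S|
    have hΔb : t * (U.card:ℝ) ≤ (Δ:ℝ) * S.card := by
      have h1 : t * (U.card:ℝ) ≤ ∑ w ∈ U, ((G.neighborFinset w ∩ S).card:ℝ) := by
        calc t * (U.card:ℝ) = ∑ _w ∈ U, t := by rw [Finset.sum_const, nsmul_eq_mul, mul_comm]
        _ ≤ _ := Finset.sum_le_sum (fun w hw => (Finset.mem_filter.mp hw).2)
      have h2 : ∑ w ∈ U, ((G.neighborFinset w ∩ S).card:ℝ)
          = ∑ x ∈ S, ((G.neighborFinset x ∩ U).card:ℝ) := by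
        exact_mod_cast congrArg (Nat.cast : ℕ → ℝ) (sum_inter_comm G U S)
      have h3 : ∑ x ∈ S, ((G.neighborFinset x ∩ U).card:ℝ) ≤ ∑ _x ∈ S, (Δ:ℝ) := by
        refine Finset.sum_le_sum fun x _ => ?_
        have hle : (G.neighborFinset x ∩ U).card ≤ Δ := by
          calc (G.neighborFinset x ∩ U).card ≤ (G.neighborFinset x).card :=
                Finset.card_le_card Finset.inter_subset_left
          _ = G.degree x := (G.card_neighborFinset_eq_degree x)
          _ ≤ Δ := hΔ x
        exact_mod_cast hle
      rw [Finset.sum_const, nsmul_eq_mul, mul_comm] at h3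
      linarith
    -- bound hb
    refine le_trans hTcard ?_
    have hinv : 1 / (t / S.card) = (S.card:ℝ) / t := one_div_div t S.card
    have hgoal : (1 + Real.log Δ) / t * S.card = (S.card:ℝ)/t * (1 + Real.log Δ) := by ring
    rw [hgoal]
    unfold hb
    rw [hinv]
    by_cases hcase : ((U.card:ℝ)) ≤ (S.card:ℝ)/t
    · rw [if_pos hcase]
      nlinarith [div_pos hs ht0]
    · rw [if_neg hcase]
      push_neg at hcase
      have hst : (0:ℝ) < (S.card:ℝ)/t := div_pos hs ht0
      have hεm : (0:ℝ) < t / S.card * U.card := by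
        have : (0:ℝ) < (U.card:ℝ) := lt_trans hst hcase
        positivity
      have hεΔ : t / S.card * U.card ≤ (Δ:ℝ) := by
        rw [div_mul_eq_mul_div, div_le_iff₀ hs]
        linarith
      have hlog : Real.log (t / S.card * U.card) ≤ Real.log Δ :=
        Real.log_le_log hεm hεΔ
      nlinarith [hst]
end

section
/- Shearer's inequality: Let Z_1, …, Z_n be discrete random variables and let I be a collection of subsets of {1,…,n} such that every index i ∈ {1,…,n} belongs to at least k members of I. Then Ent(Z_1,…,Z_n) ≤ (1/k)·Σ_{I ∈ I} Ent((Z_i)_{i∈I}). -/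
open Finset

/-!
The entropy `H(s) = Ent((Z_i)_{i ∈ s})` of the marginals is monotone in `s`, vanishes at `∅` and
is submodular, `H(s ∪ t) + H(s ∩ t) ≤ H(s) + H(t)`; submodularity is Gibbs' inequality for the
sub-probability `p(x, y) p(y, w) / p(y)` against the law `p(x, y, w)` of a triple.
Adding the indices one at a time, submodularity bounds the increment `H(V ∪ {a}) - H(V)` by the
increment of `H(s ∩ ·)` for each `s ∋ a`; as `a` lies in at least `k` sets of `I` and increments
are nonnegative, summing over `s ∈ I` gives `k H(univ) ≤ Σ_{s ∈ I} H(s)`.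
-/

/-- The probability that the discrete random variable `X` (on the finite sample space `Ω`
with probability mass function `p`) takes the value `x`. -/
noncomputable def pr {Ω α : Type*} [Fintype Ω] [DecidableEq α]
    (p : Ω → ℝ) (X : Ω → α) (x : α) : ℝ :=
  ∑ ω ∈ Finset.univ.filter fun ω => X ω = x, p ω

/-- The Shannon entropy of a discrete random variable `X`. -/
noncomputable def ent {Ω α : Type*} [Fintype Ω] [DecidableEq α]
    (p : Ω → ℝ) (X : Ω → α) : ℝ :=
  -∑ x ∈ Finset.univ.image X, pr p X x * Real.log (pr p X x)

section Entropy

variable {Ω α β γ : Type*} [Fintype Ω] [DecidableEq α] [DecidableEq β] [DecidableEq γ]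
  {p : Ω → ℝ}

lemma pr_nonneg (hp0 : ∀ ω, 0 ≤ p ω) (X : Ω → α) (x : α) : 0 ≤ pr p X x :=
  sum_nonneg fun ω _ => hp0 ω

lemma pr_le_pr_of_imp (hp0 : ∀ ω, 0 ≤ p ω) {X : Ω → α} {Y : Ω → β} {x : α} {y : β}
    (h : ∀ ω, X ω = x → Y ω = y) : pr p X x ≤ pr p Y y :=
  sum_le_sum_of_subset_of_nonneg (fun ω hω => by simpa using h ω (by simpa using hω))
    fun ω _ _ => hp0 ω

lemma pr_apply_pos (hp0 : ∀ ω, 0 ≤ p ω) (X : Ω → α) {ω : Ω} (hω : 0 < p ω) :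
    0 < pr p X (X ω) :=
  hω.trans_le (single_le_sum (fun ω' _ => hp0 ω') (by simp))

lemma sum_image_pr_mul (X : Ω → α) (G : α → ℝ) :
    ∑ x ∈ univ.image X, pr p X x * G x = ∑ ω, p ω * G (X ω) := by
  rw [← sum_fiberwise_of_maps_to (fun ω _ => mem_image_of_mem X (mem_univ ω))]
  refine sum_congr rfl fun x _ => ?_
  rw [pr, sum_mul]
  exact sum_congr rfl fun ω hω => by rw [(mem_filter.1 hω).2]

lemma sum_image_pr (hp1 : ∑ ω, p ω = 1) (X : Ω → α) : ∑ x ∈ univ.image X, pr p X x = 1 := by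
  simpa [hp1] using sum_image_pr_mul (p := p) X fun _ => 1

lemma sum_image_pr_pair (X : Ω → α) (Y : Ω → β) (y : β) :
    ∑ x ∈ univ.image X, pr p (fun ω => (X ω, Y ω)) (x, y) = pr p Y y := by
  simp only [pr, sum_filter]
  rw [sum_comm]
  refine sum_congr rfl fun ω _ => ?_
  simp [Prod.ext_iff, ite_and]

lemma ent_eq_neg_sum (X : Ω → α) : ent p X = -∑ ω, p ω * Real.log (pr p X (X ω)) := by
  rw [ent, sum_image_pr_mul X fun x => Real.log (pr p X x)]

lemma ent_le_ent_of_determines (hp0 : ∀ ω, 0 ≤ p ω) {X : Ω → α} {Y : Ω → β}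
    (h : ∀ ω ω', X ω = X ω' → Y ω = Y ω') : ent p Y ≤ ent p X := by
  rw [ent_eq_neg_sum, ent_eq_neg_sum, neg_le_neg_iff]
  refine sum_le_sum fun ω _ => ?_
  rcases (hp0 ω).eq_or_lt with h0 | h0
  · simp [← h0]
  · exact mul_le_mul_of_nonneg_left (Real.log_le_log (pr_apply_pos hp0 X h0)
      (pr_le_pr_of_imp hp0 fun ω' hω' => h ω' ω hω')) h0.le

lemma ent_congr_of_determines (hp0 : ∀ ω, 0 ≤ p ω) {X : Ω → α} {Y : Ω → β}
    (hXY : ∀ ω ω', X ω = X ω' → Y ω = Y ω') (hYX : ∀ ω ω', Y ω = Y ω' → X ω = X ω') :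
    ent p X = ent p Y :=
  le_antisymm (ent_le_ent_of_determines hp0 hYX) (ent_le_ent_of_determines hp0 hXY)

lemma ent_const (hp1 : ∑ ω, p ω = 1) (c : α) : ent p (fun _ : Ω => c) = 0 := by
  have hne : (univ : Finset Ω).Nonempty := by
    by_contra h
    simp [not_nonempty_iff_eq_empty.1 h] at hp1
  have hpr : pr p (fun _ : Ω => c) c = 1 := by simpa [pr] using hp1
  simp [ent, image_const hne, hpr]

lemma ent_le_neg_sum_mul_log (hp0 : ∀ ω, 0 ≤ p ω) (hp1 : ∑ ω, p ω = 1) (X : Ω → α)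
    {g : α → ℝ} (hg0 : ∀ x, 0 ≤ g x) (hg1 : ∑ x ∈ univ.image X, g x ≤ 1)
    (hg_pos : ∀ ω, 0 < p ω → 0 < g (X ω)) :
    ent p X ≤ -∑ ω, p ω * Real.log (g (X ω)) := by
  have hterm : ∀ ω, p ω * Real.log (g (X ω)) - p ω * Real.log (pr p X (X ω))
      ≤ p ω * (g (X ω) / pr p X (X ω)) - p ω := by
    intro ω
    rcases (hp0 ω).eq_or_lt with h0 | h0
    · simp [← h0]
    · have hpr := pr_apply_pos hp0 X h0
      have hlog := Real.log_le_sub_one_of_pos (div_pos (hg_pos ω h0) hpr)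
      rw [Real.log_div (hg_pos ω h0).ne' hpr.ne'] at hlog
      linarith [mul_le_mul_of_nonneg_left hlog h0.le]
  have hratio : ∑ ω, p ω * (g (X ω) / pr p X (X ω)) ≤ 1 := by
    rw [← sum_image_pr_mul X fun x => g x / pr p X x]
    refine le_trans (sum_le_sum fun x _ => ?_) hg1
    rcases eq_or_ne (pr p X x) 0 with h | h
    · simp [h, hg0 x]
    · rw [mul_div_cancel₀ _ h]
  have hsum := sum_le_sum fun ω (_ : ω ∈ univ) => hterm ω
  rw [sum_sub_distrib, sum_sub_distrib, hp1] at hsum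
  rw [ent_eq_neg_sum]
  linarith

lemma sum_image_pr_mul_pr_div_pr_le_one (hp0 : ∀ ω, 0 ≤ p ω) (hp1 : ∑ ω, p ω = 1)
    (X : Ω → α) (Y : Ω → β) (W : Ω → γ) :
    ∑ v ∈ univ.image fun ω => (X ω, Y ω, W ω),
      pr p (fun ω => (X ω, Y ω)) (v.1, v.2.1) * pr p (fun ω => (Y ω, W ω)) v.2 / pr p Y v.2.1
      ≤ 1 := by
  set YW := fun ω => (Y ω, W ω)
  calc _ ≤ ∑ v ∈ univ.image X ×ˢ univ.image YW,
          pr p (fun ω => (X ω, Y ω)) (v.1, v.2.1) * pr p YW v.2 / pr p Y v.2.1 := by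
        refine sum_le_sum_of_subset_of_nonneg (fun v hv => ?_) fun v _ _ => ?_
        · obtain ⟨ω, -, rfl⟩ := mem_image.1 hv
          exact mem_product.2 ⟨mem_image_of_mem _ (mem_univ ω), mem_image_of_mem _ (mem_univ ω)⟩
        · exact div_nonneg (mul_nonneg (pr_nonneg hp0 _ _) (pr_nonneg hp0 _ _)) (pr_nonneg hp0 _ _)
    _ = ∑ yw ∈ univ.image YW, pr p Y yw.1 * pr p YW yw / pr p Y yw.1 := by
        simp only [sum_product_right, ← sum_div, ← sum_mul, sum_image_pr_pair]
    _ ≤ ∑ yw ∈ univ.image YW, pr p YW yw := by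
        refine sum_le_sum fun yw _ => ?_
        rcases eq_or_ne (pr p Y yw.1) 0 with h | h
        · simpa [h] using pr_nonneg hp0 YW yw
        · rw [mul_div_cancel_left₀ _ h]
    _ = 1 := sum_image_pr hp1 YW

lemma ent_triple_add_le (hp0 : ∀ ω, 0 ≤ p ω) (hp1 : ∑ ω, p ω = 1)
    (X : Ω → α) (Y : Ω → β) (W : Ω → γ) :
    ent p (fun ω => (X ω, Y ω, W ω)) + ent p Y
      ≤ ent p (fun ω => (X ω, Y ω)) + ent p (fun ω => (Y ω, W ω)) := by
  set XY := fun ω => (X ω, Y ω)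
  set YW := fun ω => (Y ω, W ω)
  set g : α × β × γ → ℝ := fun v => pr p XY (v.1, v.2.1) * pr p YW v.2 / pr p Y v.2.1
  have hlog : ∀ ω, p ω * Real.log (g (X ω, Y ω, W ω)) = p ω * Real.log (pr p XY (XY ω))
      + p ω * Real.log (pr p YW (YW ω)) - p ω * Real.log (pr p Y (Y ω)) := by
    intro ω
    rcases (hp0 ω).eq_or_lt with h0 | h0
    · simp [← h0]
    · simp only [g]
      rw [Real.log_div (mul_pos (pr_apply_pos hp0 XY h0) (pr_apply_pos hp0 YW h0)).ne'
        (pr_apply_pos hp0 Y h0).ne', Real.log_mul (pr_apply_pos hp0 XY h0).ne'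
        (pr_apply_pos hp0 YW h0).ne']
      ring
  have hgibbs := ent_le_neg_sum_mul_log hp0 hp1 (fun ω => (X ω, Y ω, W ω)) (g := g)
    (fun v => div_nonneg (mul_nonneg (pr_nonneg hp0 _ _) (pr_nonneg hp0 _ _))
      (pr_nonneg hp0 _ _))
    (sum_image_pr_mul_pr_div_pr_le_one hp0 hp1 X Y W)
    (fun ω h0 => div_pos (mul_pos (pr_apply_pos hp0 XY h0) (pr_apply_pos hp0 YW h0))
      (pr_apply_pos hp0 Y h0))
  simp only [hlog, sum_add_distrib, sum_sub_distrib] at hgibbs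
  rw [ent_eq_neg_sum Y, ent_eq_neg_sum XY, ent_eq_neg_sum YW]
  linarith

lemma ent_pair_add_le_of_determines (hp0 : ∀ ω, 0 ≤ p ω) (hp1 : ∑ ω, p ω = 1)
    {X : Ω → α} {Y : Ω → β} {W : Ω → γ}
    (hXY : ∀ ω ω', X ω = X ω' → Y ω = Y ω') (hWY : ∀ ω ω', W ω = W ω' → Y ω = Y ω') :
    ent p (fun ω => (X ω, W ω)) + ent p Y ≤ ent p X + ent p W := by
  have hXYW : ent p (fun ω => (X ω, Y ω, W ω)) = ent p (fun ω => (X ω, W ω)) :=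
    ent_congr_of_determines hp0 (fun ω ω' h => by simp_all [Prod.ext_iff])
      fun ω ω' h => by simp_all [hXY ω ω']
  have hXY' : ent p (fun ω => (X ω, Y ω)) = ent p X :=
    ent_congr_of_determines hp0 (fun ω ω' h => by simp_all [Prod.ext_iff])
      fun ω ω' h => by simp_all [hXY ω ω']
  have hYW : ent p (fun ω => (Y ω, W ω)) = ent p W :=
    ent_congr_of_determines hp0 (fun ω ω' h => by simp_all [Prod.ext_iff])
      fun ω ω' h => by simp_all [hWY ω ω']
  simpa [hXYW, hXY', hYW] using ent_triple_add_le hp0 hp1 X Y W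

end Entropy

lemma mul_le_sum_inter_of_submodular {ι : Type*} [DecidableEq ι] {f : Finset ι → ℝ}
    (hmono : Monotone f) (hempty : f ∅ = 0)
    (hsub : ∀ s t, f (s ∪ t) + f (s ∩ t) ≤ f s + f t)
    (I : Finset (Finset ι)) (k : ℕ) (U : Finset ι)
    (hcover : ∀ i ∈ U, k ≤ #(I.filter fun s => i ∈ s)) :
    k * f U ≤ ∑ s ∈ I, f (s ∩ U) := by
  induction U using Finset.induction_on with
  | empty => simp [hempty]
  | insert a V ha ih =>
    set Δ := f (insert a V) - f V
    have hΔ : 0 ≤ Δ := sub_nonneg.2 (hmono (subset_insert a V))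
    have hstep : ∀ s ∈ I, (if a ∈ s then Δ else 0) ≤ f (s ∩ insert a V) - f (s ∩ V) := by
      intro s _
      split_ifs with has
      · have h := hsub (insert a (s ∩ V)) V
        rw [insert_union, union_eq_right.2 inter_subset_right, insert_inter_of_notMem ha,
          inter_assoc, inter_self] at h
        rw [inter_insert_of_mem has]
        linarith
      · rw [inter_insert_of_notMem has, sub_self]
    calc (k : ℝ) * f (insert a V) = k * f V + k * Δ := by ring
      _ ≤ ∑ s ∈ I, f (s ∩ V) + #(I.filter fun s => a ∈ s) * Δ :=
          add_le_add (ih fun i hi => hcover i (mem_insert_of_mem hi))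
            (mul_le_mul_of_nonneg_right (by exact_mod_cast hcover a (mem_insert_self a V)) hΔ)
      _ = ∑ s ∈ I, (f (s ∩ V) + if a ∈ s then Δ else 0) := by
          rw [sum_add_distrib, sum_ite, sum_const_zero, add_zero, sum_const, nsmul_eq_mul]
      _ ≤ ∑ s ∈ I, f (s ∩ insert a V) :=
          sum_le_sum fun s hs => by linarith [hstep s hs]

section Marginal

variable {Ω α ι : Type*} [Fintype Ω] [DecidableEq α] {p : Ω → ℝ}

noncomputable def marginalEnt (p : Ω → ℝ) (Z : ι → Ω → α) (s : Finset ι) : ℝ :=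
  ent p fun ω => fun i : {j // j ∈ s} => Z i.1 ω

lemma marginalEnt_mono (hp0 : ∀ ω, 0 ≤ p ω) (Z : ι → Ω → α) : Monotone (marginalEnt p Z) :=
  fun _ _ hst => ent_le_ent_of_determines hp0 fun _ _ h =>
    funext fun i => congrFun h ⟨i.1, hst i.2⟩

lemma marginalEnt_empty (hp0 : ∀ ω, 0 ≤ p ω) (hp1 : ∑ ω, p ω = 1) (Z : ι → Ω → α) :
    marginalEnt p Z ∅ = 0 := by
  rw [marginalEnt, ent_congr_of_determines hp0 (fun _ _ _ => rfl)
    (fun _ _ _ => Subsingleton.elim _ _ : ∀ ω ω', () = () → _), ent_const hp1]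

lemma marginalEnt_union_add_inter_le [DecidableEq ι] (hp0 : ∀ ω, 0 ≤ p ω) (hp1 : ∑ ω, p ω = 1)
    (Z : ι → Ω → α) (s t : Finset ι) :
    marginalEnt p Z (s ∪ t) + marginalEnt p Z (s ∩ t)
      ≤ marginalEnt p Z s + marginalEnt p Z t := by
  have hunion : marginalEnt p Z (s ∪ t) = ent p fun ω =>
      ((fun i : {j // j ∈ s} => Z i.1 ω), fun i : {j // j ∈ t} => Z i.1 ω) := by
    refine ent_congr_of_determines hp0 (fun ω ω' h => ?_) fun ω ω' h => funext fun i => ?_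
    · simp only [Prod.mk.injEq]
      exact ⟨funext fun i => congrFun h ⟨i.1, mem_union_left t i.2⟩,
        funext fun i => congrFun h ⟨i.1, mem_union_right s i.2⟩⟩
    · rcases mem_union.1 i.2 with hi | hi
      · exact congrFun (Prod.ext_iff.1 h).1 ⟨i.1, hi⟩
      · exact congrFun (Prod.ext_iff.1 h).2 ⟨i.1, hi⟩
  rw [hunion]
  exact ent_pair_add_le_of_determines hp0 hp1
    (fun _ _ h => funext fun i => congrFun h ⟨i.1, (mem_inter.1 i.2).1⟩)
    (fun _ _ h => funext fun i => congrFun h ⟨i.1, (mem_inter.1 i.2).2⟩)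

end Marginal

/-- Shearer's inequality: if every index `i ∈ {1,…,n}` belongs to at least `k`
members of the collection `I` of subsets of indices, then
`Ent(Z_1,…,Z_n) ≤ (1/k) * Σ_{s ∈ I} Ent((Z_i)_{i ∈ s})`. -/
theorem shearer {Ω α : Type*} [Fintype Ω] [DecidableEq α] {n : ℕ}
    (p : Ω → ℝ) (hp0 : ∀ ω, 0 ≤ p ω) (hp1 : ∑ ω, p ω = 1)
    (Z : Fin n → Ω → α) (I : Finset (Finset (Fin n))) (k : ℕ) (hk : 0 < k)
    (hcover : ∀ i : Fin n, k ≤ (I.filter fun s => i ∈ s).card) :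
    ent p (fun ω => fun i : Fin n => Z i ω)
      ≤ (1 / (k : ℝ)) * ∑ s ∈ I, ent p (fun ω => fun i : {j // j ∈ s} => Z i.1 ω) := by
  have hmain : k * marginalEnt p Z univ ≤ ∑ s ∈ I, marginalEnt p Z s := by
    simpa using mul_le_sum_inter_of_submodular (marginalEnt_mono hp0 Z)
      (marginalEnt_empty hp0 hp1 Z) (marginalEnt_union_add_inter_le hp0 hp1 Z) I k univ
      fun i _ => hcover i
  have hfull : ent p (fun ω => fun i : Fin n => Z i ω) = marginalEnt p Z univ :=
    ent_congr_of_determines hp0 (fun _ _ h => funext fun i => congrFun h i.1)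
      fun _ _ h => funext fun i => congrFun h ⟨i, mem_univ i⟩
  rw [hfull, one_div, inv_mul_eq_div, le_div_iff₀ (by exact_mod_cast hk), mul_comm]
  exact hmain
end
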